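/- arXiv:2206.11628 — 2 statements merged into one kernel-verified Lean document; each statement's English description precedes it below -/
import Mathlib

section
/- Let 0 < s < 1, N > 2s, and let A : ℝ^N → ℝ^N be continuous. For every u ∈ H^s_A(ℝ^N,ℂ), the function |u| belongs to H^s(ℝ^N) and ‖|u|‖_s ≤ ‖u‖_{s,A} (diamagnetic inequality). -/
open MeasureTheory Filter Real
open scoped ENNReal NNReal Topology

noncomputable section

/-- Euclidean space `ℝ^N`. -/
abbrev Euc (N : ℕ) := EuclideanSpace ℝ (Fin N)

/-- Squared (real) Gagliardo seminorm `[u]_s²`, as an extended real. -/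
def gagliardo2 (N : ℕ) (s : ℝ) (u : Euc N → ℝ) : ℝ≥0∞ :=
  ∫⁻ p : Euc N × Euc N,
    ENNReal.ofReal ((u p.1 - u p.2) ^ 2 / ‖p.1 - p.2‖ ^ ((N : ℝ) + 2 * s))

/-- The fractional Sobolev norm `‖u‖_s = ([u]_s² + ‖u‖_{L²}²)^{1/2}`. -/
def hsNorm (N : ℕ) (s : ℝ) (u : Euc N → ℝ) : ℝ :=
  Real.sqrt ((gagliardo2 N s u).toReal + ∫ x : Euc N, (u x) ^ 2)

/-- Membership in `H^s(ℝ^N)`: an `L²` function with finite Gagliardo seminorm. -/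
def memHs (N : ℕ) (s : ℝ) (u : Euc N → ℝ) : Prop :=
  MemLp u 2 (volume : Measure (Euc N)) ∧ gagliardo2 N s u < ⊤

/-- A radially symmetric function on `ℝ^N`. -/
def IsRadial {N : ℕ} {α : Type*} (u : Euc N → α) : Prop :=
  ∀ x y : Euc N, ‖x‖ = ‖y‖ → u x = u y

/-- The magnetic phase factor `e^{i (x-y)·A((x+y)/2)}`. -/
def magPhase (N : ℕ) (A : Euc N → Euc N) (x y : Euc N) : ℂ :=
  Complex.exp (Complex.I * ((inner ℝ (x - y) (A ((2:ℝ)⁻¹ • (x + y))) : ℝ) : ℂ))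

/-- Squared magnetic Gagliardo seminorm `[u]_{s,A}²`, as an extended real. -/
def magGagliardo2 (N : ℕ) (s : ℝ) (A : Euc N → Euc N) (u : Euc N → ℂ) : ℝ≥0∞ :=
  ∫⁻ p : Euc N × Euc N,
    ENNReal.ofReal (‖u p.1 - magPhase N A p.1 p.2 * u p.2‖ ^ 2 /
      ‖p.1 - p.2‖ ^ ((N : ℝ) + 2 * s))

/-- The squared magnetic norm `‖u‖_{s,A}² = [u]_{s,A}² + ‖u‖_{L²}²`. -/
def magNormSq (N : ℕ) (s : ℝ) (A : Euc N → Euc N) (u : Euc N → ℂ) : ℝ :=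
  (magGagliardo2 N s A u).toReal + ∫ x : Euc N, ‖u x‖ ^ 2

/-- The magnetic norm `‖u‖_{s,A}`. -/
def magNorm (N : ℕ) (s : ℝ) (A : Euc N → Euc N) (u : Euc N → ℂ) : ℝ :=
  Real.sqrt (magNormSq N s A u)

/-- Membership in `H^s_A(ℝ^N, ℂ)`: an `L²` function with finite magnetic Gagliardo
seminorm which is a `‖·‖_{s,A}`-limit of smooth compactly supported functions. -/
def memHsA (N : ℕ) (s : ℝ) (A : Euc N → Euc N) (u : Euc N → ℂ) : Prop :=
  MemLp u 2 (volume : Measure (Euc N)) ∧ magGagliardo2 N s A u < ⊤ ∧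
  ∃ φ : ℕ → Euc N → ℂ, (∀ n, ContDiff ℝ (⊤ : ℕ∞) (φ n) ∧ HasCompactSupport (φ n)) ∧
    Tendsto (fun n => magNorm N s A (fun x => u x - φ n x)) atTop (𝓝 0)

/-- Membership in the radial magnetic space `H^s_{r,A}(ℝ^N, ℂ)`. -/
def memHsrA (N : ℕ) (s : ℝ) (A : Euc N → Euc N) (u : Euc N → ℂ) : Prop :=
  memHsA N s A u ∧ IsRadial u

/-- The Riesz potential `(I_μ ∗ |u|^{p*})(x)` of a complex-valued function. -/
def rieszPot (N : ℕ) (μ pstar : ℝ) (u : Euc N → ℂ) (x : Euc N) : ℝ :=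
  ∫ y : Euc N, ‖u y‖ ^ pstar / ‖x - y‖ ^ ((N : ℝ) - μ)

/-- The Choquard energy `∫_{ℝ^N} (I_μ ∗ |u|^{p*}) |u|^{p*} dx`. -/
def choquard (N : ℕ) (μ pstar : ℝ) (u : Euc N → ℂ) : ℝ :=
  ∫ x : Euc N, rieszPot N μ pstar u x * ‖u x‖ ^ pstar

/-- The real magnetic inner product `⟨ζ, w⟩_{s,A}`. -/
def magInner (N : ℕ) (s : ℝ) (A : Euc N → Euc N) (ζ w : Euc N → ℂ) : ℝ :=
  ∫ p : Euc N × Euc N,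
    ((ζ p.1 - magPhase N A p.1 p.2 * ζ p.2) *
      (starRingEnd ℂ) (w p.1 - magPhase N A p.1 p.2 * w p.2)).re /
      ‖p.1 - p.2‖ ^ ((N : ℝ) + 2 * s)

/-- `𝓜(t) = ∫₀ᵗ 𝔐(τ) dτ`. -/
def Mscr (M : ℝ → ℝ) (t : ℝ) : ℝ := ∫ τ in (0:ℝ)..t, M τ

/-- The energy functional `J(u,v)` associated with the system. -/
def Jfun (N : ℕ) (s μ pstar : ℝ) (A : Euc N → Euc N) (M : ℝ → ℝ)
    (G : ℝ → ℝ → ℝ → ℝ) (u v : Euc N → ℂ) : ℝ :=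
  - (1 / 2) * Mscr M (magNormSq N s A u) + (1 / 2) * Mscr M (magNormSq N s A v)
    - (1 / (2 * pstar)) * choquard N μ pstar u
    - (1 / (2 * pstar)) * choquard N μ pstar v
    - (1 / 2) * ∫ x : Euc N, G ‖x‖ (‖u x‖ ^ 2) (‖v x‖ ^ 2)

/-- The pairing `⟨J'(u,v), (z₁,z₂)⟩` (the Fréchet derivative of `J`). -/
def Jpair (N : ℕ) (s μ pstar : ℝ) (A : Euc N → Euc N) (M : ℝ → ℝ)
    (Gξ Gη : ℝ → ℝ → ℝ → ℝ) (u v z₁ z₂ : Euc N → ℂ) : ℝ :=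
  - M (magNormSq N s A u) *
      (magInner N s A u z₁ + ∫ x : Euc N, (u x * (starRingEnd ℂ) (z₁ x)).re)
  + M (magNormSq N s A v) *
      (magInner N s A v z₂ + ∫ x : Euc N, (v x * (starRingEnd ℂ) (z₂ x)).re)
  - (∫ x : Euc N, rieszPot N μ pstar u x * ‖u x‖ ^ (pstar - 2) *
      (u x * (starRingEnd ℂ) (z₁ x)).re)
  - (∫ x : Euc N, rieszPot N μ pstar v x * ‖v x‖ ^ (pstar - 2) *
      (v x * (starRingEnd ℂ) (z₂ x)).re)
  - (∫ x : Euc N, Gξ ‖x‖ (‖u x‖ ^ 2) (‖v x‖ ^ 2) * (u x * (starRingEnd ℂ) (z₁ x)).re)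
  - (∫ x : Euc N, Gη ‖x‖ (‖u x‖ ^ 2) (‖v x‖ ^ 2) * (v x * (starRingEnd ℂ) (z₂ x)).re)

/-- The sharp Hardy–Littlewood–Sobolev constant
`C(N,μ) = π^{(N−μ)/2} (Γ(μ/2)/Γ((N+μ)/2)) (Γ(N)/Γ(N/2))^{μ/N}`. -/
def CHLS (N : ℕ) (μ : ℝ) : ℝ :=
  Real.pi ^ (((N : ℝ) - μ) / 2) * (Real.Gamma (μ / 2) / Real.Gamma (((N : ℝ) + μ) / 2)) *
    (Real.Gamma (N : ℝ) / Real.Gamma ((N : ℝ) / 2)) ^ (μ / (N : ℝ))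


private lemma div_le_div_of_le_left' {a b c : ℝ} (h : a ≤ b) (hc : 0 < c) :
    a / c ≤ b / c := by
  gcongr

private lemma div_le_div_of_nonneg_right' {a b c : ℝ} (h : a ≤ b) (hc : 0 ≤ c) :
    a / c ≤ b / c := by
  rcases eq_or_lt_of_le hc with rfl | hc
  · simp
  · exact div_le_div_of_le_left' h hc

/-- **Diamagnetic inequality.** For `0 < s < 1`, `N > 2s` and `A : ℝ^N → ℝ^N`
continuous, every `u ∈ H^s_A(ℝ^N, ℂ)` satisfies `|u| ∈ H^s(ℝ^N)` and
`‖|u|‖_s ≤ ‖u‖_{s,A}`. -/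
theorem diamagnetic_inequality (N : ℕ) (s : ℝ)
    (hs0 : 0 < s) (hs1 : s < 1) (h2s : 2 * s < N)
    (A : Euc N → Euc N) (hA : Continuous A)
    (u : Euc N → ℂ) (hu : memHsA N s A u) :
    memHs N s (fun x => ‖u x‖) ∧ hsNorm N s (fun x => ‖u x‖) ≤ magNorm N s A u := by

  have hphase : ∀ x y : Euc N, ‖magPhase N A x y‖ = 1 := by
    intro x y
    simp [magPhase, Complex.norm_exp]
  have hkey : gagliardo2 N s (fun x => ‖u x‖) ≤ magGagliardo2 N s A u := by
    refine lintegral_mono fun p => ?_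
    apply ENNReal.ofReal_le_ofReal
    have hden : (0:ℝ) ≤ ‖p.1 - p.2‖ ^ ((N : ℝ) + 2 * s) :=
      Real.rpow_nonneg (norm_nonneg _) _
    apply div_le_div_of_nonneg_right' ?_ hden
    have h1 : |‖u p.1‖ - ‖u p.2‖| ≤ ‖u p.1 - magPhase N A p.1 p.2 * u p.2‖ := by
      have := abs_norm_sub_norm_le (u p.1) (magPhase N A p.1 p.2 * u p.2)
      rwa [norm_mul, hphase, one_mul] at this
    calc (‖u p.1‖ - ‖u p.2‖) ^ 2 = |‖u p.1‖ - ‖u p.2‖| ^ 2 := (sq_abs _).symm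
    _ ≤ ‖u p.1 - magPhase N A p.1 p.2 * u p.2‖ ^ 2 := by
        exact pow_le_pow_left₀ (abs_nonneg _) h1 2
  have hfin : gagliardo2 N s (fun x => ‖u x‖) < ⊤ := lt_of_le_of_lt hkey hu.2.1
  have hL2 : MemLp (fun x => ‖u x‖) 2 (volume : Measure (Euc N)) := hu.1.norm
  refine ⟨⟨hL2, hfin⟩, ?_⟩
  unfold hsNorm magNorm magNormSq
  apply Real.sqrt_le_sqrt
  have hsame : (∫ x : Euc N, (‖u x‖) ^ 2) = ∫ x : Euc N, ‖u x‖ ^ 2 := rfl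
  rw [hsame]
  have := ENNReal.toReal_mono hu.2.1.ne hkey
  linarith


end
end

section
/- Let 0 < s < 1 and N > 2s. Let ψ ∈ C^∞(ℝ^N) satisfy 0 ≤ ψ ≤ 1, ψ ≡ 0 on the ball B(0,1), and ψ ≡ 1 outside B(0,2); for R > 0 set φ_R(x) = ψ(x/R). Suppose (w_n) is a sequence of functions bounded in H^s(ℝ^N) such that w_n → w strongly in L²(B) for every ball B ⊂ ℝ^N. Then lim_{R→∞} limsup_{n→∞} ∬_{ℝ^{2N}} |w_n(x)|² |φ_R(x) − φ_R(y)|² / |x−y|^{N+2s} dx dy = 0. -/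
open MeasureTheory Filter Real
open scoped ENNReal NNReal Topology

noncomputable section

lemma aux_ball_rpow (N : ℕ) (hN : 0 < N) {a : ℝ} (ha0 : 0 < a) (haN : a < N) :
    ∫⁻ z in Metric.ball (0:Euc N) 1, ENNReal.ofReal (‖z‖ ^ (-a)) < ∞ := by
  haveI : Nonempty (Fin N) := ⟨⟨0, hN⟩⟩
  haveI : Nontrivial (Euc N) := inferInstance
  set b : ℝ := 1/2 with hb
  have hb0 : (0:ℝ) < b := by norm_num
  have hb1 : b < 1 := by norm_num
  set μ := (volume : Measure (Euc N))
  set A : ℕ → Set (Euc N) := fun k => Metric.ball 0 (b^k) \ Metric.ball 0 (b^(k+1)) with hA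
  have hsub : Metric.ball (0:Euc N) 1 ⊆ (⋃ k, A k) ∪ {0} := by
    intro z hz
    rcases eq_or_ne z 0 with rfl | hz0
    · exact Or.inr rfl
    have hzn : 0 < ‖z‖ := norm_pos_iff.mpr hz0
    have hz1 : ‖z‖ < 1 := by simpa [Metric.mem_ball, dist_zero_right] using hz
    obtain ⟨m, hm⟩ : ∃ m : ℕ, b ^ m ≤ ‖z‖ := by
      obtain ⟨m, hm⟩ := exists_pow_lt_of_lt_one hzn hb1
      exact ⟨m, hm.le⟩
    have hQ : ∃ m : ℕ, b ^ m ≤ ‖z‖ := ⟨m, hm⟩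
    have hk1 : b ^ Nat.find hQ ≤ ‖z‖ := Nat.find_spec hQ
    have hkne : Nat.find hQ ≠ 0 := by
      intro h0
      rw [h0] at hk1; simp at hk1; linarith
    obtain ⟨j, hkj⟩ : ∃ j, Nat.find hQ = j + 1 :=
      ⟨Nat.find hQ - 1, (Nat.succ_pred_eq_of_pos (Nat.pos_of_ne_zero hkne)).symm⟩
    have hj : ¬ (b ^ j ≤ ‖z‖) := Nat.find_min hQ (by omega)
    rw [hkj] at hk1
    left
    exact Set.mem_iUnion.2 ⟨j, by
      simp only [hA, Set.mem_diff, Metric.mem_ball, dist_zero_right]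
      exact ⟨by linarith [not_le.mp hj], by simpa using not_lt.mpr hk1⟩⟩
  set f : Euc N → ℝ≥0∞ := fun z => ENNReal.ofReal (‖z‖ ^ (-a)) with hf
  set V := μ (Metric.ball (0:Euc N) 1) with hV
  have hVfin : V < ∞ := measure_ball_lt_top
  set c : ℝ := b ^ (-a) with hc
  have hc0 : 0 < c := Real.rpow_pos_of_pos hb0 _
  set r : ℝ≥0∞ := ENNReal.ofReal (c * b ^ N) with hr
  have hfinrank : Module.finrank ℝ (Euc N) = N := finrank_euclideanSpace_fin
  have hr1 : r < 1 := by
    rw [hr]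
    have : c * b ^ N = b ^ ((N:ℝ) - a) := by
      rw [hc, ← Real.rpow_natCast b N, ← Real.rpow_add hb0]
      ring_nf
    rw [this]
    exact ENNReal.ofReal_lt_one.mpr (Real.rpow_lt_one hb0.le hb1 (by linarith))
  have hpow : ∀ k : ℕ, ((b ^ k : ℝ)) ^ (-a) = c ^ k := by
    intro k
    rw [hc, ← Real.rpow_natCast b k, ← Real.rpow_mul hb0.le, mul_comm,
      Real.rpow_mul hb0.le, Real.rpow_natCast]
  have key : ∀ k : ℕ, ∫⁻ z in A k, f z ≤ (ENNReal.ofReal c * V) * r ^ k := by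
    intro k
    have h1 : ∫⁻ z in A k, f z ≤ ∫⁻ _ in A k, ENNReal.ofReal (c ^ (k+1)) := by
      apply setLIntegral_mono measurable_const
      intro z hz
      have hzlb : b ^ (k+1) ≤ ‖z‖ := by
        have := hz.2
        simpa [Metric.mem_ball, dist_zero_right, not_lt] using this
      apply ENNReal.ofReal_le_ofReal
      calc ‖z‖ ^ (-a) ≤ ((b ^ (k+1) : ℝ)) ^ (-a) :=
            Real.rpow_le_rpow_of_nonpos (by positivity) hzlb (by linarith)
        _ = c ^ (k+1) := hpow (k+1)
    have h2 : μ (A k) ≤ (ENNReal.ofReal (b ^ N)) ^ k * V := by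
      calc μ (A k) ≤ μ (Metric.ball (0:Euc N) (b ^ k)) := measure_mono Set.diff_subset
        _ = ENNReal.ofReal ((b ^ k) ^ N) * V := by
            rw [hV, Measure.addHaar_ball _ _ (by positivity), hfinrank]
        _ = (ENNReal.ofReal (b ^ N)) ^ k * V := by
            rw [← ENNReal.ofReal_pow (by positivity), ← pow_mul, ← pow_mul, mul_comm k N]
    calc ∫⁻ z in A k, f z ≤ ENNReal.ofReal (c ^ (k+1)) * μ (A k) := by
          refine h1.trans ?_
          rw [setLIntegral_const]
      _ ≤ ENNReal.ofReal (c ^ (k+1)) * ((ENNReal.ofReal (b ^ N)) ^ k * V) := by gcongr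
      _ = (ENNReal.ofReal c * V) * r ^ k := by
          rw [ENNReal.ofReal_pow hc0.le, hr, ENNReal.ofReal_mul hc0.le, mul_pow, pow_succ]
          ring
  calc ∫⁻ z in Metric.ball (0:Euc N) 1, f z
      ≤ ∫⁻ z in (⋃ k, A k) ∪ {0}, f z := lintegral_mono_set hsub
    _ ≤ (∫⁻ z in ⋃ k, A k, f z) + ∫⁻ z in ({0} : Set (Euc N)), f z := lintegral_union_le _ _ _
    _ = ∫⁻ z in ⋃ k, A k, f z := by
        rw [Measure.restrict_eq_zero.mpr (measure_singleton _), lintegral_zero_measure, add_zero]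
    _ ≤ ∑' k, ∫⁻ z in A k, f z := lintegral_iUnion_le _ _
    _ ≤ ∑' k, (ENNReal.ofReal c * V) * r ^ k := ENNReal.tsum_le_tsum key
    _ = (ENNReal.ofReal c * V) * ∑' k, r ^ k := ENNReal.tsum_mul_left
    _ = (ENNReal.ofReal c * V) * (1 - r)⁻¹ := by rw [ENNReal.tsum_geometric]
    _ < ∞ := by
        apply ENNReal.mul_lt_top (ENNReal.mul_lt_top ENNReal.ofReal_lt_top hVfin)
        exact ENNReal.inv_lt_top.mpr (tsub_pos_iff_lt.mpr hr1)

lemma kernel_finite (N : ℕ) (hN : 0 < N) {s : ℝ} (hs0 : 0 < s) (hs1 : s < 1) (Lr : ℝ) :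
    ∫⁻ z : Euc N, ENNReal.ofReal (min 1 (Lr^2 * ‖z‖^2 / 1^2) / ‖z‖ ^ ((N:ℝ) + 2*s)) < ∞ := by
  haveI : Nonempty (Fin N) := ⟨⟨0, hN⟩⟩
  haveI : Nontrivial (Euc N) := inferInstance
  set p : ℝ := (N:ℝ) + 2*s with hp
  have hppos : 0 < p := by positivity
  have hpN : (N:ℝ) < p := by rw [hp]; linarith
  have hfinrank : Module.finrank ℝ (Euc N) = N := finrank_euclideanSpace_fin
  set g : Euc N → ℝ≥0∞ := fun z => ENNReal.ofReal (min 1 (Lr^2 * ‖z‖^2 / 1^2) / ‖z‖ ^ p) with hg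
  rw [show (∫⁻ z : Euc N, g z) = (∫⁻ z in Metric.ball (0:Euc N) 1, g z)
      + ∫⁻ z in (Metric.ball (0:Euc N) 1)ᶜ, g z from
    (lintegral_add_compl g Metric.isOpen_ball.measurableSet).symm]
  apply ENNReal.add_lt_top.mpr
  constructor
  · -- ball part
    have hbd : ∀ z ∈ Metric.ball (0:Euc N) 1, g z ≤
        ENNReal.ofReal (Lr^2) * ENNReal.ofReal (‖z‖ ^ (-(p-2))) := by
      intro z _
      rw [← ENNReal.ofReal_mul (by positivity)]
      apply ENNReal.ofReal_le_ofReal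
      rcases eq_or_ne z 0 with rfl | hz0
      · rw [norm_zero]
        have h0 : min (1:ℝ) (Lr^2 * 0^2 / 1^2) = 0 := by norm_num
        rw [h0, zero_div]
        positivity
      · have hzn : 0 < ‖z‖ := norm_pos_iff.mpr hz0
        have h1 : min 1 (Lr^2 * ‖z‖^2 / 1^2) / ‖z‖ ^ p ≤ (Lr^2 * ‖z‖^2) / ‖z‖ ^ p := by
          gcongr
          simp only [one_pow, div_one]
          exact min_le_right 1 (Lr^2 * ‖z‖^2)
        refine h1.trans (le_of_eq ?_)
        rw [mul_div_assoc, ← Real.rpow_natCast ‖z‖ 2, ← Real.rpow_sub hzn]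
        congr 2
        push_cast; ring
    calc ∫⁻ z in Metric.ball (0:Euc N) 1, g z
        ≤ ∫⁻ z in Metric.ball (0:Euc N) 1,
            ENNReal.ofReal (Lr^2) * ENNReal.ofReal (‖z‖ ^ (-(p-2))) := by
          apply setLIntegral_mono (by fun_prop) hbd
      _ = ENNReal.ofReal (Lr^2) * ∫⁻ z in Metric.ball (0:Euc N) 1,
            ENNReal.ofReal (‖z‖ ^ (-(p-2))) := lintegral_const_mul' _ _ ENNReal.ofReal_ne_top
      _ < ∞ := by
          apply ENNReal.mul_lt_top ENNReal.ofReal_lt_top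
          rcases le_or_gt (p-2) 0 with hple | hpgt
          · calc ∫⁻ z in Metric.ball (0:Euc N) 1, ENNReal.ofReal (‖z‖ ^ (-(p-2)))
                ≤ ∫⁻ _ in Metric.ball (0:Euc N) 1, ENNReal.ofReal ((2:ℝ) ^ (-(p-2))) := by
                  apply setLIntegral_mono measurable_const
                  intro z hz
                  apply ENNReal.ofReal_le_ofReal
                  apply Real.rpow_le_rpow (norm_nonneg z) ?_ (by linarith)
                  have : ‖z‖ < 1 := by simpa [Metric.mem_ball, dist_zero_right] using hz
                  linarith
              _ < ∞ := by
                  rw [setLIntegral_const]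
                  exact ENNReal.mul_lt_top ENNReal.ofReal_lt_top measure_ball_lt_top
          · exact aux_ball_rpow N hN hpgt (by rw [hp]; push_cast; linarith)
  · -- complement part
    have hbd : ∀ z ∈ (Metric.ball (0:Euc N) 1)ᶜ, g z ≤
        ENNReal.ofReal ((2:ℝ)^p) * ENNReal.ofReal ((1 + ‖z‖) ^ (-p)) := by
      intro z hz
      have hz1 : 1 ≤ ‖z‖ := by
        simpa [Metric.mem_ball, dist_zero_right, not_lt] using hz
      have hzn : 0 < ‖z‖ := lt_of_lt_of_le one_pos hz1
      rw [← ENNReal.ofReal_mul (by positivity)]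
      apply ENNReal.ofReal_le_ofReal
      have h1 : min 1 (Lr^2 * ‖z‖^2 / 1^2) / ‖z‖ ^ p ≤ 1 / ‖z‖ ^ p := by
        gcongr
        exact min_le_left _ _
      refine h1.trans ?_
      rw [one_div, ← Real.rpow_neg hzn.le]
      have key : (2 * ‖z‖ : ℝ) ^ (-p) ≤ (1 + ‖z‖) ^ (-p) :=
        Real.rpow_le_rpow_of_nonpos (by linarith) (by linarith) (by linarith)
      have h2 : (2 * ‖z‖ : ℝ) ^ (-p) = (2:ℝ)^(-p) * ‖z‖ ^ (-p) :=
        Real.mul_rpow (by norm_num) hzn.le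
      calc ‖z‖ ^ (-p) = (2:ℝ)^p * ((2*‖z‖:ℝ) ^ (-p)) := by
            rw [h2, ← mul_assoc, ← Real.rpow_add two_pos]
            simp
        _ ≤ (2:ℝ)^p * (1 + ‖z‖) ^ (-p) := by
            have h2p : (0:ℝ) < (2:ℝ)^p := Real.rpow_pos_of_pos two_pos p
            nlinarith
    calc ∫⁻ z in (Metric.ball (0:Euc N) 1)ᶜ, g z
        ≤ ∫⁻ z in (Metric.ball (0:Euc N) 1)ᶜ,
            ENNReal.ofReal ((2:ℝ)^p) * ENNReal.ofReal ((1 + ‖z‖) ^ (-p)) := by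
          apply setLIntegral_mono (by fun_prop) hbd
      _ ≤ ∫⁻ z : Euc N, ENNReal.ofReal ((2:ℝ)^p) * ENNReal.ofReal ((1 + ‖z‖) ^ (-p)) :=
          setLIntegral_le_lintegral _ _
      _ = ENNReal.ofReal ((2:ℝ)^p) * ∫⁻ z : Euc N, ENNReal.ofReal ((1 + ‖z‖) ^ (-p)) :=
          lintegral_const_mul' _ _ ENNReal.ofReal_ne_top
      _ < ∞ := by
          apply ENNReal.mul_lt_top ENNReal.ofReal_lt_top
          have := finite_integral_one_add_norm (E := Euc N)
            (μ := (volume : Measure (Euc N))) (r := p) (by rw [hfinrank]; exact hpN)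
          exact this

/-- **Vanishing of the commutator term for cutoffs escaping to infinity.** If `(w_n)`
is bounded in `H^s(ℝ^N)` and converges to `w` in `L²` of every ball, and
`φ_R(x) = ψ(x/R)` with `ψ` smooth, `0 ≤ ψ ≤ 1`, `ψ ≡ 0` on `B(0,1)` and `ψ ≡ 1` off
`B(0,2)`, then
`lim_{R→∞} limsup_n ∬ |w_n(x)|² |φ_R(x)−φ_R(y)|²/|x−y|^{N+2s} = 0`. -/
theorem cutoff_infinity_vanishing (N : ℕ) (s : ℝ)
    (hs0 : 0 < s) (hs1 : s < 1) (h2s : 2 * s < N)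
    (ψ : Euc N → ℝ) (hψsmooth : ContDiff ℝ (⊤ : ℕ∞) ψ)
    (hψ01 : ∀ x, ψ x ∈ Set.Icc (0:ℝ) 1)
    (hψ0 : ∀ x ∈ Metric.ball (0 : Euc N) 1, ψ x = 0)
    (hψ1 : ∀ x ∉ Metric.ball (0 : Euc N) 2, ψ x = 1)
    (w : Euc N → ℝ) (wn : ℕ → Euc N → ℝ)
    (hbd : ∃ C : ℝ, ∀ n, memHs N s (wn n) ∧ hsNorm N s (wn n) ≤ C)
    (hloc : ∀ (z : Euc N) (r : ℝ), 0 < r →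
      Tendsto (fun n => eLpNorm (fun x => wn n x - w x) 2
        ((volume : Measure (Euc N)).restrict (Metric.ball z r))) atTop (𝓝 0)) :
    Tendsto (fun R : ℝ =>
        Filter.limsup (fun n => ∫⁻ q : Euc N × Euc N,
          ENNReal.ofReal ((wn n q.1) ^ 2 *
            (ψ (R⁻¹ • q.1) - ψ (R⁻¹ • q.2)) ^ 2 /
            ‖q.1 - q.2‖ ^ ((N : ℝ) + 2 * s))) atTop)
      atTop (𝓝 (0 : ℝ≥0∞)) := by

  classical
  have hN0 : 0 < N := by
    by_contra h
    push_neg at h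
    interval_cases N
    · simp at h2s; linarith
  haveI : Nonempty (Fin N) := ⟨⟨0, hN0⟩⟩
  haveI : Nontrivial (Euc N) := inferInstance
  obtain ⟨C, hC⟩ := hbd
  set p : ℝ := (N:ℝ) + 2*s with hp
  have hppos : 0 < p := by positivity
  -- Lipschitz constant for ψ
  have hdiff : Differentiable ℝ ψ := hψsmooth.differentiable (by simp)
  have hfc : Continuous (fderiv ℝ ψ) := hψsmooth.continuous_fderiv (by simp)
  have hsupp : HasCompactSupport (fderiv ℝ ψ) := by
    apply HasCompactSupport.intro (isCompact_closedBall (0:Euc N) 2)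
    intro x hx
    have hx2 : (2:ℝ) < ‖x‖ := by
      simpa [Metric.mem_closedBall, dist_zero_right, not_le] using hx
    have hev : ψ =ᶠ[nhds x] (fun _ => (1:ℝ)) := by
      have hopen : IsOpen {y : Euc N | 2 < ‖y‖} :=
        isOpen_lt continuous_const continuous_norm
      refine Filter.eventuallyEq_of_mem (hopen.mem_nhds hx2) ?_
      intro y hy
      exact hψ1 y (by
        simp only [Metric.mem_ball, dist_zero_right, not_lt]
        exact le_of_lt hy)
    rw [hev.fderiv_eq]
    exact fderiv_const_apply 1
  obtain ⟨M0, hM0⟩ := hsupp.exists_bound_of_continuous hfc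
  set Lr : ℝ := max M0 0 with hLrdef
  have hLr0 : 0 ≤ Lr := le_max_right _ _
  set K : ℝ≥0 := ⟨Lr, hLr0⟩ with hKdef
  have hK : ∀ x, ‖fderiv ℝ ψ x‖₊ ≤ K := fun x => by
    rw [← NNReal.coe_le_coe]
    exact (hM0 x).trans (le_max_left _ _)
  have hLipW : LipschitzWith K ψ := lipschitzWith_of_nnnorm_fderiv_le hdiff hK
  have hLip : ∀ x y : Euc N, |ψ x - ψ y| ≤ Lr * ‖x - y‖ := fun x y => by
    have := hLipW.dist_le_mul x y
    rwa [Real.dist_eq, dist_eq_norm] at this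
  -- the kernel
  set g : ℝ → Euc N → ℝ≥0∞ :=
    fun R z => ENNReal.ofReal (min 1 (Lr^2 * ‖z‖^2 / R^2) / ‖z‖ ^ p) with hgdef
  have hgmeas : ∀ R, Measurable (g R) := by
    intro R
    apply ENNReal.measurable_ofReal.comp
    fun_prop
  have hg0 : ∀ R, g R 0 = 0 := by
    intro R
    rw [hgdef]
    simp only [norm_zero]
    have h0 : min (1:ℝ) (Lr^2 * 0^2 / R^2) = 0 := by norm_num
    rw [h0, zero_div, ENNReal.ofReal_zero]
  set I : ℝ → ℝ≥0∞ := fun R => ∫⁻ z : Euc N, g R z with hIdef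
  -- pointwise square bound
  have hsq : ∀ R : ℝ, 1 ≤ R → ∀ x y : Euc N,
      (ψ (R⁻¹ • x) - ψ (R⁻¹ • y))^2 ≤ min 1 (Lr^2 * ‖x - y‖^2 / R^2) := by
    intro R hR x y
    have hR0 : (0:ℝ) < R := lt_of_lt_of_le one_pos hR
    set d := ψ (R⁻¹ • x) - ψ (R⁻¹ • y) with hd
    obtain ⟨h1x, h2x⟩ := hψ01 (R⁻¹ • x)
    obtain ⟨h1y, h2y⟩ := hψ01 (R⁻¹ • y)
    have hd1 : |d| ≤ 1 := by
      rw [abs_le]; constructor <;> simp only [hd] <;> linarith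
    have hd2 : |d| ≤ Lr * (‖x - y‖ / R) := by
      have h := hLip (R⁻¹ • x) (R⁻¹ • y)
      have hsub : R⁻¹ • x - R⁻¹ • y = R⁻¹ • (x - y) := (smul_sub _ _ _).symm
      rw [hsub, norm_smul] at h
      have : ‖(R⁻¹ : ℝ)‖ = R⁻¹ := by
        rw [Real.norm_eq_abs, abs_of_pos (inv_pos.mpr hR0)]
      rw [this] at h
      calc |d| ≤ Lr * (R⁻¹ * ‖x - y‖) := h
        _ = Lr * (‖x - y‖ / R) := by ring
    refine le_min ?_ ?_
    · calc d^2 = |d|^2 := (sq_abs d).symm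
        _ ≤ 1^2 := pow_le_pow_left₀ (abs_nonneg d) hd1 2
        _ = 1 := one_pow 2
    · calc d^2 = |d|^2 := (sq_abs d).symm
        _ ≤ (Lr * (‖x - y‖ / R))^2 := pow_le_pow_left₀ (abs_nonneg d) hd2 2
        _ = Lr^2 * ‖x - y‖^2 / R^2 := by field_simp
  -- main estimate for fixed n and R ≥ 1
  have hFle : ∀ R : ℝ, 1 ≤ R → ∀ n : ℕ,
      (∫⁻ q : Euc N × Euc N, ENNReal.ofReal ((wn n q.1) ^ 2 *
        (ψ (R⁻¹ • q.1) - ψ (R⁻¹ • q.2)) ^ 2 / ‖q.1 - q.2‖ ^ p))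
        ≤ ENNReal.ofReal (C^2) * I R := by
    intro R hR n
    obtain ⟨hmem, hnorm⟩ := hC n
    have haem : AEStronglyMeasurable (wn n) (volume : Measure (Euc N)) := hmem.1.1
    have hw2 : Integrable (fun x => (wn n x)^2) (volume : Measure (Euc N)) :=
      hmem.1.integrable_sq
    have hL2 : ∫ x : Euc N, (wn n x)^2 ≤ C^2 := by
      have h1 : 0 ≤ (gagliardo2 N s (wn n)).toReal := ENNReal.toReal_nonneg
      have h2 : 0 ≤ ∫ x : Euc N, (wn n x)^2 := integral_nonneg fun x => sq_nonneg _
      have h3 : Real.sqrt ((gagliardo2 N s (wn n)).toReal + ∫ x : Euc N, (wn n x)^2) ≤ C :=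
        hnorm
      nlinarith [Real.sq_sqrt (by linarith :
          0 ≤ (gagliardo2 N s (wn n)).toReal + ∫ x : Euc N, (wn n x)^2),
        Real.sqrt_nonneg ((gagliardo2 N s (wn n)).toReal + ∫ x : Euc N, (wn n x)^2)]
    set v : Euc N → ℝ := haem.mk (wn n) with hvdef
    have hvmeas : Measurable v := haem.stronglyMeasurable_mk.measurable
    have hvae : wn n =ᵐ[volume] v := haem.ae_eq_mk
    calc (∫⁻ q : Euc N × Euc N, ENNReal.ofReal ((wn n q.1) ^ 2 *
          (ψ (R⁻¹ • q.1) - ψ (R⁻¹ • q.2)) ^ 2 / ‖q.1 - q.2‖ ^ p))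
        ≤ ∫⁻ q : Euc N × Euc N, ENNReal.ofReal ((wn n q.1)^2) * g R (q.1 - q.2) := by
          apply lintegral_mono
          intro q
          dsimp only
          rw [mul_div_assoc, ENNReal.ofReal_mul (sq_nonneg _)]
          gcongr
          apply ENNReal.ofReal_le_ofReal
          rcases eq_or_lt_of_le (Real.rpow_nonneg (norm_nonneg (q.1 - q.2)) p) with hd0 | hd0
          · rw [← hd0, div_zero, div_zero]
          · exact (div_le_div_iff_of_pos_right hd0).mpr (hsq R hR _ _)
      _ = ∫⁻ q : Euc N × Euc N, ENNReal.ofReal ((v q.1)^2) * g R (q.1 - q.2) := by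
          rw [Measure.volume_eq_prod]
          apply lintegral_congr_ae
          filter_upwards [Measure.quasiMeasurePreserving_fst.ae_eq_comp hvae] with q hq
          simp only [Function.comp_apply] at hq
          rw [hq]
      _ = (∫⁻ x : Euc N, ENNReal.ofReal ((v x)^2)) * I R := by
          rw [Measure.volume_eq_prod, lintegral_prod _ (by fun_prop)]
          have hinner : ∀ x : Euc N,
              (∫⁻ y : Euc N, ENNReal.ofReal ((v x)^2) * g R (x - y)) =
                ENNReal.ofReal ((v x)^2) * I R := by
            intro x
            rw [lintegral_const_mul _ (show Measurable fun y : Euc N => g R (x - y) from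
              (hgmeas R).comp (measurable_const.sub measurable_id))]
            congr 1
            have hrev : ∀ y : Euc N, g R (x - y) = g R (y - x) := fun y => by
              rw [hgdef]
              simp only [norm_sub_rev x y]
            simp_rw [hrev]
            exact lintegral_sub_right_eq_self (g R) x
          simp_rw [hinner]
          exact lintegral_mul_const _ (by fun_prop)
      _ = ENNReal.ofReal (∫ x : Euc N, (wn n x)^2) * I R := by
          congr 1
          have h1 : (∫⁻ x : Euc N, ENNReal.ofReal ((v x)^2)) =
              ∫⁻ x : Euc N, ENNReal.ofReal ((wn n x)^2) := by
            apply lintegral_congr_ae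
            filter_upwards [hvae] with x hx
            rw [hx]
          rw [h1, ← ofReal_integral_eq_lintegral_ofReal hw2
            (Filter.Eventually.of_forall fun x => sq_nonneg _)]
      _ ≤ ENNReal.ofReal (C^2) * I R :=
          mul_le_mul_left (ENNReal.ofReal_le_ofReal hL2) _
  -- the kernel integral tends to 0
  have hItend : Tendsto I atTop (nhds 0) := by
    have hfin := kernel_finite N hN0 hs0 hs1 Lr
    have h := tendsto_lintegral_filter_of_dominated_convergence (μ := (volume : Measure (Euc N)))
      (l := (atTop : Filter ℝ)) (F := g) (f := fun _ => (0:ℝ≥0∞)) (bound := g 1)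
      (Filter.Eventually.of_forall fun R => hgmeas R)
      ?hbound ?hfin ?hlim
    · simpa [lintegral_zero] using h
    case hbound =>
      filter_upwards [eventually_ge_atTop (1:ℝ)] with R hR
      apply Filter.Eventually.of_forall
      intro z
      rw [hgdef]
      apply ENNReal.ofReal_le_ofReal
      rcases eq_or_lt_of_le (Real.rpow_nonneg (norm_nonneg z) p) with hd0 | hd0
      · rw [← hd0, div_zero, div_zero]
      · refine (div_le_div_iff_of_pos_right hd0).mpr (min_le_min le_rfl ?_)
        have hnum : (0:ℝ) ≤ Lr^2 * ‖z‖^2 := by positivity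
        have hR2 : (1:ℝ) ≤ R^2 := by nlinarith
        calc Lr^2 * ‖z‖^2 / R^2 ≤ Lr^2 * ‖z‖^2 / 1 :=
              div_le_div_of_nonneg_left hnum one_pos hR2
          _ = Lr^2 * ‖z‖^2 / 1^2 := by norm_num
    case hfin => exact hfin.ne
    case hlim =>
      apply Filter.Eventually.of_forall
      intro z
      rcases eq_or_ne z 0 with rfl | hz0
      · simp only [hg0]
        exact tendsto_const_nhds
      · have hzn : 0 < ‖z‖ := norm_pos_iff.mpr hz0
        have hdpos : 0 < ‖z‖ ^ p := Real.rpow_pos_of_pos hzn p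
        have hupper : Tendsto (fun R : ℝ => ENNReal.ofReal ((Lr^2 * ‖z‖^2 / ‖z‖ ^ p) / R^2))
            atTop (nhds 0) := by
          rw [← ENNReal.ofReal_zero]
          apply ENNReal.tendsto_ofReal
          apply Tendsto.div_atTop tendsto_const_nhds
          exact tendsto_pow_atTop two_ne_zero
        apply tendsto_of_tendsto_of_tendsto_of_le_of_le tendsto_const_nhds hupper
        · intro R; exact zero_le
        · intro R
          rw [hgdef]
          apply ENNReal.ofReal_le_ofReal
          calc min 1 (Lr^2 * ‖z‖^2 / R^2) / ‖z‖ ^ p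
              ≤ (Lr^2 * ‖z‖^2 / R^2) / ‖z‖ ^ p :=
                (div_le_div_iff_of_pos_right hdpos).mpr (min_le_right _ _)
            _ = Lr^2 * ‖z‖^2 / ‖z‖ ^ p / R^2 := by ring
  -- assemble
  have hmain : ∀ᶠ R in (atTop : Filter ℝ),
      Filter.limsup (fun n => ∫⁻ q : Euc N × Euc N,
          ENNReal.ofReal ((wn n q.1) ^ 2 *
            (ψ (R⁻¹ • q.1) - ψ (R⁻¹ • q.2)) ^ 2 /
            ‖q.1 - q.2‖ ^ p)) atTop ≤ ENNReal.ofReal (C^2) * I R := by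
    filter_upwards [eventually_ge_atTop (1:ℝ)] with R hR
    calc Filter.limsup (fun n => ∫⁻ q : Euc N × Euc N,
          ENNReal.ofReal ((wn n q.1) ^ 2 *
            (ψ (R⁻¹ • q.1) - ψ (R⁻¹ • q.2)) ^ 2 /
            ‖q.1 - q.2‖ ^ p)) atTop
        ≤ Filter.limsup (fun _ : ℕ => ENNReal.ofReal (C^2) * I R) atTop :=
          Filter.limsup_le_limsup (Filter.Eventually.of_forall fun n => hFle R hR n)
      _ = ENNReal.ofReal (C^2) * I R := Filter.limsup_const _
  have hupper : Tendsto (fun R => ENNReal.ofReal (C^2) * I R) atTop (nhds 0) := by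
    have := ENNReal.Tendsto.const_mul (a := ENNReal.ofReal (C^2)) hItend (Or.inr ENNReal.ofReal_ne_top)
    simpa using this
  exact tendsto_of_tendsto_of_tendsto_of_le_of_le' tendsto_const_nhds hupper
    (Filter.Eventually.of_forall fun R => zero_le) hmain


end
end
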